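/- Let n ≥ 1, s ∈ ℝ and 0 < q, r ≤ ∞. Every function g ∈ C_c^∞(ℝⁿ) satisfies ‖g‖_{K̇^s_{q,r}} < ∞ if and only if either s/n + 1/q > 0, or s/n + 1/q = 0 and r = ∞. -/

import Mathlib

open MeasureTheory Set ENNReal Filter

noncomputable section

abbrev Euc (n : ℕ) : Type := EuclideanSpace ℝ (Fin n)

def annulus (n : ℕ) (j : ℤ) : Set (Euc n) :=
  {x : Euc n | (2 : ℝ) ^ (j - 1) ≤ ‖x‖ ∧ ‖x‖ < (2 : ℝ) ^ j}

def herzNorm (n : ℕ) (s : ℝ) (q r : ℝ≥0∞) (f : Euc n → ℝ) : ℝ≥0∞ :=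
  if r = ⊤ then
    ⨆ j : ℤ, ENNReal.ofReal ((2 : ℝ) ^ ((j : ℝ) * s)) *
      eLpNorm ((annulus n j).indicator f) q volume
  else
    (∑' j : ℤ, (ENNReal.ofReal ((2 : ℝ) ^ ((j : ℝ) * s)) *
      eLpNorm ((annulus n j).indicator f) q volume) ^ r.toReal) ^ (1 / r.toReal)

/-!
Put `t = s + n/q`. The annulus `A_j` is `2^j • A_0`, so `|A_j| = 2^{jn} |A_0|`. Hence the `j`-th
term `2^{js} ‖g χ_{A_j}‖_q` of a function bounded by `M` is at most `M |A_0|^{1/q} 2^{jt}`, and it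
vanishes once `A_j` misses the support of `g`; for a bump function equal to `1` on the unit ball
it equals `|A_0|^{1/q} 2^{jt}` for all `j ≤ 0`. Everything thus reduces to whether the one-sided
geometric sequence `(2^{jt})_{j ≤ 0}` lies in `ℓ^r`, which happens iff `t > 0`, or `t = 0` and
`r = ∞`.
-/

open Metric Function Topology
open scoped Pointwise

section GeometricSequences

variable {a : ℤ → ℝ≥0∞} {c : ℝ≥0∞} {t : ℝ} {J : ℤ}

theorem iSup_lt_top_of_le_two_rpow (hc : c ≠ ⊤) (ht : 0 ≤ t)
    (ha : ∀ j ≤ J, a j ≤ c * 2 ^ ((j : ℝ) * t)) (hJ : ∀ j, J < j → a j = 0) :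
    ⨆ j, a j < ⊤ := by
  calc ⨆ j, a j ≤ c * 2 ^ ((J : ℝ) * t) := iSup_le fun j => ?_
    _ < ⊤ := mul_lt_top hc.lt_top (rpow_ne_top_of_ne_zero two_ne_zero ofNat_ne_top).lt_top
  rcases le_or_gt j J with hj | hj
  · refine (ha j hj).trans ?_
    gcongr
    exact one_le_two
  · simp [hJ j hj]

theorem tsum_lt_top_of_le_two_rpow (hc : c ≠ ⊤) (ht : 0 < t)
    (ha : ∀ j ≤ J, a j ≤ c * 2 ^ ((j : ℝ) * t)) (hJ : ∀ j, J < j → a j = 0) :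
    ∑' j, a j < ⊤ := by
  have hsupp : support a ⊆ range (fun k : ℕ => J - k) := fun j hj =>
    ⟨(J - j).toNat, by have := not_lt.1 (mt (hJ j) hj); simp only; omega⟩
  have hinj : Injective (fun k : ℕ => J - k) := fun k l h => by simpa using h
  have hgeom : ∀ k : ℕ, a (J - k) ≤ c * 2 ^ ((J : ℝ) * t) * (2 ^ (-t)) ^ k := fun k =>
    calc a (J - k) ≤ c * 2 ^ (((J - k : ℤ) : ℝ) * t) := ha _ (by omega)
      _ = _ := by
        rw [mul_assoc, ← rpow_mul_natCast, ← rpow_add _ _ two_ne_zero ofNat_ne_top]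
        push_cast
        ring_nf
  rw [← hinj.tsum_eq hsupp]
  calc ∑' k : ℕ, a (J - k) ≤ ∑' k : ℕ, c * 2 ^ ((J : ℝ) * t) * (2 ^ (-t)) ^ k :=
        ENNReal.tsum_le_tsum hgeom
    _ = c * 2 ^ ((J : ℝ) * t) * ∑' k : ℕ, (2 ^ (-t)) ^ k := ENNReal.tsum_mul_left
    _ < ⊤ := mul_lt_top (mul_lt_top hc.lt_top
        (rpow_ne_top_of_ne_zero two_ne_zero ofNat_ne_top).lt_top)
        (tsum_geometric_lt_top.2 (rpow_lt_one_of_one_lt_of_neg one_lt_two (neg_neg_of_pos ht)))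

theorem iSup_eq_top_of_two_rpow_le (hc : c ≠ 0) (ht : t < 0)
    (ha : ∀ j : ℤ, j ≤ 0 → c * 2 ^ ((j : ℝ) * t) ≤ a j) : ⨆ j, a j = ⊤ := by
  have hlim : Tendsto (fun k : ℕ => c * (2 ^ (-t)) ^ k) atTop (𝓝 ⊤) := by
    have := ENNReal.tendsto_pow_atTop_nhds_top_iff.2 (one_lt_rpow one_lt_two (neg_pos.2 ht))
    simpa [mul_top hc] using ENNReal.Tendsto.const_mul (a := c) this (Or.inl top_ne_zero)
  refine top_le_iff.1 (le_of_tendsto' hlim fun k => ?_)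
  calc c * (2 ^ (-t)) ^ k = c * 2 ^ (((-k : ℤ) : ℝ) * t) := by
        rw [← rpow_mul_natCast]; push_cast; ring_nf
    _ ≤ a (-k) := ha _ (by omega)
    _ ≤ ⨆ j, a j := le_iSup a _

theorem tsum_eq_top_of_const_le (hc : c ≠ 0) (ha : ∀ j : ℤ, j ≤ 0 → c ≤ a j) : ∑' j, a j = ⊤ := by
  refine top_le_iff.1 ?_
  calc ⊤ = ∑' _ : ℕ, c := (ENNReal.tsum_const_eq_top_of_ne_zero hc).symm
    _ ≤ ∑' k : ℕ, a (-k) := ENNReal.tsum_le_tsum fun k => ha _ (by omega)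
    _ ≤ ∑' j, a j := ENNReal.tsum_comp_le_tsum_of_injective (fun k l h => by simpa using h) a

end GeometricSequences

section Annulus

theorem annulus_eq_smul (n : ℕ) (j : ℤ) : annulus n j = ((2 : ℝ) ^ j) • annulus n 0 := by
  have h2j : (0 : ℝ) < 2 ^ j := by positivity
  ext x
  rw [mem_smul_set_iff_inv_smul_mem₀ h2j.ne', annulus, annulus, mem_ofPred_eq, mem_ofPred_eq,
    norm_smul, norm_inv, Real.norm_of_nonneg h2j.le, zpow_sub₀ two_ne_zero, zpow_one,
    zero_sub, zpow_neg, zpow_one, zpow_zero, div_eq_mul_inv, le_inv_mul_iff₀ h2j,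
    inv_mul_lt_iff₀ h2j, mul_one]

theorem volume_annulus (n : ℕ) (j : ℤ) :
    volume (annulus n j) = 2 ^ ((j : ℝ) * n) * volume (annulus n 0) := by
  rw [annulus_eq_smul n j, Measure.addHaar_smul, finrank_euclideanSpace_fin, ← zpow_natCast,
    ← zpow_mul, abs_of_pos (by positivity), ← Real.rpow_intCast,
    ← ENNReal.ofReal_rpow_of_pos two_pos, ENNReal.ofReal_ofNat]
  push_cast
  rfl

theorem measurableSet_annulus (n : ℕ) (j : ℤ) : MeasurableSet (annulus n j) :=
  (measurableSet_le measurable_const measurable_norm).inter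
    (measurableSet_lt measurable_norm measurable_const)

theorem annulus_subset_ball (n : ℕ) (j : ℤ) : annulus n j ⊆ ball 0 (2 ^ j) := fun x hx => by
  simpa using hx.2

theorem disjoint_ball_annulus (n : ℕ) (j : ℤ) : Disjoint (ball 0 (2 ^ (j - 1))) (annulus n j) :=
  disjoint_left.2 fun x hx hx' => by
    rw [mem_ball_zero_iff] at hx
    exact hx.not_ge hx'.1

theorem volume_annulus_zero_ne_top (n : ℕ) : volume (annulus n 0) ≠ ⊤ :=
  ne_top_of_le_ne_top measure_ball_lt_top.ne (measure_mono (annulus_subset_ball n 0))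

theorem volume_annulus_zero_ne_zero {n : ℕ} (hn : n ≠ 0) : volume (annulus n 0) ≠ 0 := by
  have : Nontrivial (Euc n) := Module.nontrivial_of_finrank_pos (R := ℝ)
    (by rw [finrank_euclideanSpace_fin]; omega)
  obtain ⟨x, hx⟩ := exists_norm_eq (Euc n) (by norm_num : (0 : ℝ) ≤ 3 / 4)
  have hball : ball x (1 / 4) ⊆ annulus n 0 := fun y hy => by
    rw [mem_ball, dist_eq_norm] at hy
    have hyx := abs_lt.1 ((abs_norm_sub_norm_le y x).trans_lt hy)
    simp only [annulus, mem_ofPred_eq]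
    constructor <;> norm_num <;> linarith
  exact ((measure_ball_pos volume x (by norm_num)).trans_le (measure_mono hball)).ne'

end Annulus

section HerzTerm

variable {n : ℕ} {s : ℝ} {q : ℝ≥0∞}

def herzTerm (n : ℕ) (s : ℝ) (q : ℝ≥0∞) (f : Euc n → ℝ) (j : ℤ) : ℝ≥0∞ :=
  ENNReal.ofReal ((2 : ℝ) ^ ((j : ℝ) * s)) * eLpNorm ((annulus n j).indicator f) q volume

theorem herzNorm_eq (r : ℝ≥0∞) (f : Euc n → ℝ) :
    herzNorm n s q r f = if r = ⊤ then ⨆ j, herzTerm n s q f j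
      else (∑' j, herzTerm n s q f j ^ r.toReal) ^ (1 / r.toReal) :=
  rfl

theorem two_rpow_mul_volume_annulus_rpow (j : ℤ) :
    ENNReal.ofReal ((2 : ℝ) ^ ((j : ℝ) * s)) * volume (annulus n j) ^ (1 / q.toReal) =
      volume (annulus n 0) ^ (1 / q.toReal) * 2 ^ ((j : ℝ) * (s + n / q.toReal)) := by
  rw [volume_annulus, ENNReal.mul_rpow_of_nonneg _ _ (by positivity), ← ENNReal.rpow_mul,
    ← ENNReal.ofReal_rpow_of_pos two_pos, ENNReal.ofReal_ofNat, ← mul_assoc,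
    ← rpow_add _ _ two_ne_zero ofNat_ne_top, mul_comm]
  congr 2
  ring

theorem herzTerm_le_of_norm_le {f : Euc n → ℝ} {M : ℝ} (hf : ∀ x, ‖f x‖ ≤ M) (j : ℤ) :
    herzTerm n s q f j ≤
      ‖M‖ₑ * volume (annulus n 0) ^ (1 / q.toReal) * 2 ^ ((j : ℝ) * (s + n / q.toReal)) := by
  have hind : ∀ x, ‖(annulus n j).indicator f x‖ ≤ ‖(annulus n j).indicator (fun _ => M) x‖ :=
    fun x => by
      by_cases hx : x ∈ annulus n j
      · simpa [hx] using (hf x).trans (le_abs_self M)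
      · simp [hx]
  calc herzTerm n s q f j
      ≤ ENNReal.ofReal ((2 : ℝ) ^ ((j : ℝ) * s)) * (‖M‖ₑ * volume (annulus n j) ^ (1 / q.toReal)) :=
        mul_le_mul_right ((eLpNorm_mono hind).trans (eLpNorm_indicator_const_le _ _)) _
    _ = _ := by rw [mul_left_comm, two_rpow_mul_volume_annulus_rpow, mul_assoc]

theorem herzTerm_eq_of_eqOn_one (hn : n ≠ 0) (hq : q ≠ 0) {f : Euc n → ℝ} {j : ℤ}
    (hf : EqOn f 1 (annulus n j)) :
    herzTerm n s q f j =
      volume (annulus n 0) ^ (1 / q.toReal) * 2 ^ ((j : ℝ) * (s + n / q.toReal)) := by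
  have hvol : volume (annulus n j) ≠ 0 := by
    rw [volume_annulus]
    exact mul_ne_zero (rpow_pos two_pos ofNat_ne_top).ne' (volume_annulus_zero_ne_zero hn)
  rw [herzTerm, indicator_congr hf, Pi.one_def,
    eLpNorm_indicator_const' (measurableSet_annulus n j) hvol hq, enorm_one, one_mul,
    two_rpow_mul_volume_annulus_rpow]

theorem herzTerm_eq_zero_of_support_subset {f : Euc n → ℝ} {j : ℤ}
    (hf : support f ⊆ ball 0 (2 ^ (j - 1))) : herzTerm n s q f j = 0 := by
  rw [herzTerm, indicator_eq_zero'.2 ((disjoint_ball_annulus n j).mono_left hf), eLpNorm_zero,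
    mul_zero]

end HerzTerm

section HerzNorm

variable {n : ℕ} {s : ℝ} {q r : ℝ≥0∞}

theorem herzNorm_lt_top_of_bounded (hr : 0 < r) {g : Euc n → ℝ} {M : ℝ} (hM : ∀ x, ‖g x‖ ≤ M)
    (hg : Bornology.IsBounded (support g))
    (ht : 0 < s + n / q.toReal ∨ s + n / q.toReal = 0 ∧ r = ⊤) :
    herzNorm n s q r g < ⊤ := by
  set t := s + n / q.toReal
  obtain ⟨R, hR⟩ := hg.subset_ball 0
  obtain ⟨J, hJ⟩ := pow_unbounded_of_one_lt R one_lt_two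
  set c := ‖M‖ₑ * volume (annulus n 0) ^ (1 / q.toReal)
  have hc : c ≠ ⊤ :=
    mul_ne_top enorm_ne_top (rpow_ne_top_of_nonneg (by positivity) (volume_annulus_zero_ne_top n))
  have hle : ∀ j : ℤ, herzTerm n s q g j ≤ c * 2 ^ ((j : ℝ) * t) := herzTerm_le_of_norm_le hM
  have hvanish : ∀ j : ℤ, (J : ℤ) < j → herzTerm n s q g j = 0 := fun j hj =>
    herzTerm_eq_zero_of_support_subset <| hR.trans <| ball_subset_ball <| hJ.le.trans <| by
      rw [← zpow_natCast]
      exact zpow_le_zpow_right₀ one_le_two (by omega)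
  rw [herzNorm_eq]
  split_ifs with hrtop
  · exact iSup_lt_top_of_le_two_rpow hc (ht.elim le_of_lt fun h => h.1.ge) (fun j _ => hle j)
      hvanish
  · have hp : 0 < r.toReal := toReal_pos hr.ne' hrtop
    have htpos : 0 < t := ht.resolve_right fun h => hrtop h.2
    refine (rpow_lt_top_of_nonneg (by positivity) (tsum_lt_top_of_le_two_rpow (J := J)
      (rpow_ne_top_of_nonneg hp.le hc) (mul_pos htpos hp) (fun j _ => ?_) fun j hj => ?_).ne)
    · calc herzTerm n s q g j ^ r.toReal ≤ (c * 2 ^ ((j : ℝ) * t)) ^ r.toReal :=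
            rpow_le_rpow (hle j) hp.le
        _ = c ^ r.toReal * 2 ^ ((j : ℝ) * (t * r.toReal)) := by
            rw [mul_rpow_of_nonneg _ _ hp.le, ← rpow_mul, mul_assoc]
    · rw [hvanish j hj, zero_rpow_of_pos hp]

theorem herzNorm_eq_top_of_eqOn_one (hn : n ≠ 0) (hq : q ≠ 0) (hr : 0 < r) {g : Euc n → ℝ}
    (hg : EqOn g 1 (closedBall 0 1)) (ht : s + n / q.toReal ≤ 0)
    (hcrit : s + n / q.toReal = 0 → r ≠ ⊤) :
    herzNorm n s q r g = ⊤ := by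
  set t := s + n / q.toReal
  set c := volume (annulus n 0) ^ (1 / q.toReal)
  have hc : c ≠ 0 :=
    (rpow_pos (pos_iff_ne_zero.2 (volume_annulus_zero_ne_zero hn))
      (volume_annulus_zero_ne_top n)).ne'
  have hterm : ∀ j : ℤ, j ≤ 0 → herzTerm n s q g j = c * 2 ^ ((j : ℝ) * t) := fun j hj =>
    herzTerm_eq_of_eqOn_one hn hq <| hg.mono <| (annulus_subset_ball n j).trans <|
      ball_subset_closedBall.trans <| closedBall_subset_closedBall <|
        zpow_le_one_of_nonpos₀ one_le_two hj
  rw [herzNorm_eq]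
  split_ifs with hrtop
  · exact iSup_eq_top_of_two_rpow_le hc (ht.lt_of_ne fun h => hcrit h hrtop)
      fun j hj => (hterm j hj).ge
  · have hp : 0 < r.toReal := toReal_pos hr.ne' hrtop
    have hlow : ∀ j : ℤ, j ≤ 0 → c ^ r.toReal ≤ herzTerm n s q g j ^ r.toReal := fun j hj => by
      rw [hterm j hj]
      gcongr
      calc c = c * 2 ^ (0 : ℝ) := by rw [rpow_zero, mul_one]
        _ ≤ c * 2 ^ ((j : ℝ) * t) := by
          gcongr
          · exact one_le_two
          · exact mul_nonneg_of_nonpos_of_nonpos (by exact_mod_cast hj) ht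
    have hcp : c ^ r.toReal ≠ 0 := (rpow_pos (pos_iff_ne_zero.2 hc)
      (rpow_ne_top_of_nonneg (by positivity) (volume_annulus_zero_ne_top n))).ne'
    rw [tsum_eq_top_of_const_le hcp hlow, top_rpow_of_pos (by positivity)]

end HerzNorm

/-- `C_c^∞(ℝⁿ) ⊂ K̇^s_{q,r}(ℝⁿ)` if and only if `s/n + 1/q > 0`, or
`s/n + 1/q = 0` and `r = ∞`. -/
theorem smooth_compactly_supported_mem_herz_iff
    (n : ℕ) (hn : 1 ≤ n) (s : ℝ) (q r : ℝ≥0∞) (hq : 0 < q) (hr : 0 < r) :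
    (∀ g : Euc n → ℝ, ContDiff ℝ (⊤ : ℕ∞) g → HasCompactSupport g →
        herzNorm n s q r g < ⊤) ↔
      (0 < s / (n : ℝ) + (q⁻¹).toReal ∨
        (s / (n : ℝ) + (q⁻¹).toReal = 0 ∧ r = ⊤)) := by
  have hn0 : (0 : ℝ) < n := by exact_mod_cast hn
  have hcrit : s / n + (q⁻¹).toReal = (s + n / q.toReal) / n := by
    rw [toReal_inv]
    field_simp
  rw [hcrit, div_pos_iff_of_pos_right hn0, div_eq_iff hn0.ne', zero_mul]
  constructor
  · intro h
    by_contra! hc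
    let φ : ContDiffBump (0 : Euc n) := ⟨1, 2, one_pos, one_lt_two⟩
    exact (h φ φ.contDiff φ.hasCompactSupport).ne <| herzNorm_eq_top_of_eqOn_one (by omega)
      hq.ne' hr (fun x hx => φ.one_of_mem_closedBall hx) hc.1 hc.2
  · rintro ht g hg hsupp
    obtain ⟨M, hM⟩ := hg.continuous.bounded_above_of_compact_support hsupp
    exact herzNorm_lt_top_of_bounded hr hM (hsupp.isBounded.subset (subset_tsupport g)) ht
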